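/- The tridiagonal (ρ+1)×(ρ+1) matrix L with entries L_{i,i-1} = iγ, L_{i,i} = k - iγ - (ρ-i)β, and L_{i,i+1} = (ρ-i)β (for 0 ≤ i ≤ ρ), where k, γ, β, ρ are positive integers, has eigenvalues exactly {k - i(γ+β) : 0 ≤ i ≤ ρ}; in particular its eigenvalues are in arithmetic progression with common difference γ+β. -/

import Mathlib

/-!
Let `T` be the operator `p ↦ γX(p(X - 1) - p) + β(ρ - X)(p(X + 1) - p) + kp` on polynomials.
Evaluation at the nodes `0, 1, …, ρ` intertwines `T` with `L` (the coefficients `iγ` and `(ρ - i)β`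
vanish at `i = 0` and `i = ρ`, so no value outside the nodes is needed): `L V = V M` for the
Vandermonde matrix `V` of the nodes and the matrix `M` of `T` in the basis `1, X, …, X^ρ`.
The terms of degree `m + 1` in `T(X^m)` cancel, so `M` is upper triangular with diagonal entries
`k - m(γ + β)`, and `L` has the spectrum of `M` because `V` is invertible.
-/

open SimpleGraph

/-- The Hamming graph on `Fin n → Q`: words adjacent iff they differ in one coordinate. -/
def hammingGraph (n : ℕ) (Q : Type*) [DecidableEq Q] : SimpleGraph (Fin n → Q) where
  Adj x y := hammingDist x y = 1
  symm := ⟨fun x y h => by show hammingDist y x = 1; rw [hammingDist_comm]; exact h⟩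
  loopless := ⟨fun x h => by have h' : hammingDist x x = 1 := h; rw [hammingDist_self] at h'; exact absurd h'.symm one_ne_zero⟩

/-- Distance from a vertex to a code, via graph distance. -/
noncomputable def distToCode {V : Type*} (G : SimpleGraph V) (C : Set V) (x : V) : ℕ :=
  sInf {d | ∃ c ∈ C, G.dist x c = d}

/-- The `i`-th cell of the distance partition of a code. -/
noncomputable def codeCell {V : Type*} (G : SimpleGraph V) (C : Set V) (i : ℕ) : Set V :=
  {x | distToCode G C x = i}

/-- The number of neighbors of `x` lying in `S`. -/
noncomputable def nbrCount {V : Type*} (G : SimpleGraph V) (x : V) (S : Set V) : ℕ :=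
  (G.neighborSet x ∩ S).ncard

/-- Covering radius of a code. -/
noncomputable def covRad {V : Type*} (G : SimpleGraph V) (C : Set V) : ℕ :=
  sSup {d | ∃ x, distToCode G C x = d}

/-- A code is completely regular if its distance partition is equitable. -/
def IsCompRegCode {V : Type*} (G : SimpleGraph V) (C : Set V) : Prop :=
  ∀ i j : ℕ, ∀ x ∈ codeCell G C i, ∀ y ∈ codeCell G C i,
    nbrCount G x (codeCell G C j) = nbrCount G y (codeCell G C j)

/-- Intersection numbers `γ, α, β` of a code with covering radius `ρ`. -/
def HasIntNums {V : Type*} (G : SimpleGraph V) (C : Set V) (ρ : ℕ) (γ α β : ℕ → ℕ) : Prop :=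
  γ 0 = 0 ∧ β ρ = 0 ∧
  ∀ i ≤ ρ, ∀ x ∈ codeCell G C i,
    (1 ≤ i → nbrCount G x (codeCell G C (i-1)) = γ i) ∧
    nbrCount G x (codeCell G C i) = α i ∧
    (i < ρ → nbrCount G x (codeCell G C (i+1)) = β i)

/-- Equitable partition of the vertex set of a graph. -/
def IsEquitable {V : Type*} (G : SimpleGraph V) (Pa : Set (Set V)) : Prop :=
  ∀ P ∈ Pa, ∀ P' ∈ Pa, ∀ x ∈ P, ∀ y ∈ P, nbrCount G x P' = nbrCount G y P'

/-- Quotient graph of a graph by a partition of its vertex set. -/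
def quotientGraph {V : Type*} (G : SimpleGraph V) (Pa : Set (Set V)) : SimpleGraph Pa where
  Adj P P' := P ≠ P' ∧ ∃ x ∈ (P : Set V), ∃ y ∈ (P' : Set V), G.Adj x y
  symm := ⟨by
    rintro P P' ⟨hne, x, hx, y, hy, hxy⟩
    exact ⟨hne.symm, y, hy, x, hx, hxy.symm⟩⟩
  loopless := ⟨by rintro P ⟨hne, -⟩; exact hne rfl⟩

/-- Completely regular partition with common intersection numbers. -/
def IsCompRegPartition {V : Type*} (G : SimpleGraph V) (Pa : Set (Set V))
    (ρ : ℕ) (γ α β : ℕ → ℕ) : Prop :=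
  Setoid.IsPartition Pa ∧ IsEquitable G Pa ∧
    ∀ P ∈ Pa, IsCompRegCode G P ∧ covRad G P = ρ ∧ HasIntNums G P ρ γ α β

/-- Distance-regular graph of diameter `D` with intersection arrays `b`, `c`. -/
def IsDistRegular {V : Type*} (G : SimpleGraph V) (D : ℕ) (b c : ℕ → ℕ) : Prop :=
  G.Connected ∧ (∀ x y : V, G.dist x y ≤ D) ∧ (∃ x y : V, G.dist x y = D) ∧
  ∀ i ≤ D, ∀ x y : V, G.dist x y = i →
    (1 ≤ i → nbrCount G y {z | G.dist x z = i - 1} = c i) ∧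
    (i < D → nbrCount G y {z | G.dist x z = i + 1} = b i)

/-- The tridiagonal quotient matrix of a completely regular code. -/
noncomputable def quotMatrix (ρ : ℕ) (γ α β : ℕ → ℕ) : Matrix (Fin (ρ+1)) (Fin (ρ+1)) ℝ :=
  Matrix.of fun i j =>
    if (j : ℕ) + 1 = (i : ℕ) then (γ (i : ℕ) : ℝ)
    else if (i : ℕ) = (j : ℕ) then (α (i : ℕ) : ℝ)
    else if (i : ℕ) + 1 = (j : ℕ) then (β (i : ℕ) : ℝ)
    else 0

open Polynomial Matrix

theorem spectrum_eq_of_isUnit_of_mul_eq_mul {R A : Type*} [CommSemiring R] [Ring A] [Algebra R A]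
    {a b p : A} (hp : IsUnit p) (h : a * p = p * b) : spectrum R a = spectrum R b := by
  obtain ⟨u, rfl⟩ := hp
  rw [(Units.eq_mul_inv_iff_mul_eq u).2 h, spectrum.units_conjugate]

theorem Matrix.IsUpperTriangular.spectrum_eq {K n : Type*} [Field K] [Fintype n] [DecidableEq n]
    [LinearOrder n] {M : Matrix n n K} (h : M.IsUpperTriangular) :
    spectrum K M = Set.range M.diag := by
  ext x
  simp only [mem_spectrum_iff_isRoot_charpoly, charpoly_of_isUpperTriangular _ h, IsRoot.def,
    eval_prod, eval_sub, eval_X, eval_C, Finset.prod_eq_zero_iff, Finset.mem_univ, true_and,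
    sub_eq_zero, Set.mem_range, diag_apply]
  exact exists_congr fun _ => eq_comm

theorem Fin.sum_ite_val_eq {M : Type*} [AddCommMonoid M] {n : ℕ} (t : ℕ) (f : ℕ → M) :
    ∑ j : Fin n, (if (j : ℕ) = t then f j else 0) = if t < n then f t else 0 := by
  simp only [Fin.sum_univ_eq_sum_range (fun j => if j = t then f j else 0), Finset.sum_ite_eq',
    Finset.mem_range]

section CommRing

variable {R : Type*} [CommRing R]

theorem Matrix.vandermonde_mul_of_coeff_apply {n : ℕ} (v : Fin n → R) (p : Fin n → R[X])
    (hp : ∀ m, (p m).natDegree < n) (i m : Fin n) :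
    (vandermonde v * of fun (j m : Fin n) => (p m).coeff j) i m = (p m).eval (v i) := by
  rw [mul_apply, eval_eq_sum_range' (hp m), ← Fin.sum_univ_eq_sum_range]
  exact Finset.sum_congr rfl fun j _ => mul_comm _ _

def Matrix.tridiag (ρ : ℕ) (a b c : ℕ → R) : Matrix (Fin (ρ + 1)) (Fin (ρ + 1)) R :=
  of fun i j =>
    if (j : ℕ) + 1 = i then a i else if (i : ℕ) = j then b i else if (i : ℕ) + 1 = j then c i else 0

theorem Matrix.sum_tridiag_mul {ρ : ℕ} {a b c : ℕ → R} (ha : a 0 = 0) (hc : c ρ = 0) (g : ℕ → R)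
    (i : Fin (ρ + 1)) :
    ∑ j, tridiag ρ a b c i j * g j = a i * g (i - 1) + b i * g i + c i * g (i + 1) := by
  have hi := i.isLt
  have hentry (j : Fin (ρ + 1)) : tridiag ρ a b c i j * g j =
      (if (j : ℕ) = i - 1 then a i * g j else 0) + (if (j : ℕ) = i then b i * g j else 0) +
        (if (j : ℕ) = i + 1 then c i * g j else 0) := by
    have := j.isLt
    simp only [tridiag, of_apply]
    -- for `i = 0` the truncated `i - 1 = 0` puts the `a`-term on the diagonal, where `ha` kills it
    split_ifs <;> first | (exfalso; omega) | ring1 | simp [show (i : ℕ) = 0 by omega, ha]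
  rw [Finset.sum_congr rfl fun j _ => hentry j, Finset.sum_add_distrib, Finset.sum_add_distrib,
    Fin.sum_ite_val_eq _ (fun j => a i * g j), Fin.sum_ite_val_eq _ (fun j => b i * g j),
    Fin.sum_ite_val_eq _ (fun j => c i * g j), if_pos (by omega), if_pos hi]
  split_ifs
  · rfl
  · simp [show (i : ℕ) = ρ by omega, hc]

theorem Polynomial.coeff_X_add_C_pow_sub_X_pow_of_le (r : R) {m n : ℕ} (h : m ≤ n) :
    ((X + C r) ^ m - X ^ m).coeff n = 0 := by
  rcases h.eq_or_lt with rfl | h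
  · simp [coeff_X_add_C_pow]
  · simp [coeff_X_add_C_pow, coeff_X_pow, Nat.choose_eq_zero_of_lt h, h.ne']

theorem Polynomial.coeff_X_add_C_pow_sub_X_pow_self (r : R) (n : ℕ) :
    ((X + C r) ^ (n + 1) - X ^ (n + 1)).coeff n = (n + 1) * r := by
  simp [coeff_X_add_C_pow, mul_comm]

noncomputable def birthDeathOp (k γ β ρ : R) (p : R[X]) : R[X] :=
  C γ * X * (p.comp (X - 1) - p) + (C ρ - X) * C β * (p.comp (X + 1) - p) + C k * p

theorem eval_birthDeathOp (k γ β ρ x : R) (p : R[X]) :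
    (birthDeathOp k γ β ρ p).eval x =
      x * γ * (p.eval (x - 1) - p.eval x) + (ρ - x) * β * (p.eval (x + 1) - p.eval x) +
        k * p.eval x := by
  simp only [birthDeathOp, eval_add, eval_mul, eval_sub, eval_comp, eval_C, eval_X, eval_one]
  ring

theorem coeff_birthDeathOp_X_pow_succ (k γ β ρ : R) (m n : ℕ) :
    (birthDeathOp k γ β ρ (X ^ m)).coeff (n + 1) =
      γ * ((X + C (-1) : R[X]) ^ m - X ^ m).coeff n
        + ρ * β * ((X + C 1 : R[X]) ^ m - X ^ m).coeff (n + 1)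
        - β * ((X + C 1 : R[X]) ^ m - X ^ m).coeff n + k * (X ^ m : R[X]).coeff (n + 1) := by
  simp only [birthDeathOp, X_pow_comp, C_neg, C_1, ← sub_eq_add_neg, coeff_add, sub_mul,
    mul_comm _ (C β), coeff_sub, mul_assoc, coeff_C_mul, coeff_X_mul]
  ring

theorem coeff_birthDeathOp_X_pow_of_lt (k γ β ρ : R) {m n : ℕ} (h : m < n) :
    (birthDeathOp k γ β ρ (X ^ m)).coeff n = 0 := by
  obtain ⟨n, rfl⟩ := Nat.exists_eq_add_one_of_ne_zero (by omega : n ≠ 0)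
  rw [coeff_birthDeathOp_X_pow_succ, coeff_X_add_C_pow_sub_X_pow_of_le _ (by omega : m ≤ n),
    coeff_X_add_C_pow_sub_X_pow_of_le _ h.le, coeff_X_add_C_pow_sub_X_pow_of_le _ (by omega),
    coeff_X_pow, if_neg h.ne']
  ring

theorem coeff_birthDeathOp_X_pow_self (k γ β ρ : R) (m : ℕ) :
    (birthDeathOp k γ β ρ (X ^ m)).coeff m = k - m * (γ + β) := by
  rcases m with _ | m
  · simp [birthDeathOp]
  · rw [coeff_birthDeathOp_X_pow_succ, coeff_X_add_C_pow_sub_X_pow_self,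
      coeff_X_add_C_pow_sub_X_pow_self, coeff_X_add_C_pow_sub_X_pow_of_le _ le_rfl, coeff_X_pow_self]
    push_cast
    ring

theorem natDegree_birthDeathOp_X_pow_le (k γ β ρ : R) (m : ℕ) :
    (birthDeathOp k γ β ρ (X ^ m)).natDegree ≤ m :=
  natDegree_le_iff_coeff_eq_zero.2 fun _ => coeff_birthDeathOp_X_pow_of_lt k γ β ρ

noncomputable def birthDeathOpMatrix (k γ β : R) (ρ : ℕ) : Matrix (Fin (ρ + 1)) (Fin (ρ + 1)) R :=
  of fun n m => (birthDeathOp k γ β ρ (X ^ (m : ℕ))).coeff n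

theorem isUpperTriangular_birthDeathOpMatrix (k γ β : R) (ρ : ℕ) :
    (birthDeathOpMatrix k γ β ρ).IsUpperTriangular :=
  fun _ _ h => coeff_birthDeathOp_X_pow_of_lt k γ β ρ h

theorem Matrix.tridiag_mul_vandermonde (k γ β : R) (ρ : ℕ) :
    tridiag ρ (fun i => i * γ) (fun i => k - i * γ - (ρ - i) * β) (fun i => (ρ - i) * β) *
        vandermonde (fun i => ((i : ℕ) : R)) =
      vandermonde (fun i => ((i : ℕ) : R)) * birthDeathOpMatrix k γ β ρ := by
  ext i m
  rw [birthDeathOpMatrix, vandermonde_mul_of_coeff_apply _ _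
      (fun m => (natDegree_birthDeathOp_X_pow_le _ _ _ _ _).trans_lt m.isLt),
    eval_birthDeathOp, mul_apply]
  simp only [vandermonde_apply]
  rw [sum_tridiag_mul (by simp) (by simp) (fun j => (j : R) ^ (m : ℕ))]
  simp only [eval_pow, eval_X]
  obtain h0 | h0 := Nat.eq_zero_or_pos (i : ℕ)
  · simp only [h0]
    push_cast
    ring
  · push_cast [Nat.cast_sub h0]
    ring

end CommRing

theorem tridiagonal_eigenvalues_general (k γ β ρ : ℕ)
    (L : Matrix (Fin (ρ+1)) (Fin (ρ+1)) ℝ)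
    (hL : L = Matrix.of fun (i j : Fin (ρ+1)) =>
      if (j : ℕ) + 1 = (i : ℕ) then ((i : ℕ) : ℝ) * (γ : ℝ)
      else if (i : ℕ) = (j : ℕ) then
        (k : ℝ) - ((i : ℕ) : ℝ) * (γ : ℝ) - ((ρ : ℝ) - ((i : ℕ) : ℝ)) * (β : ℝ)
      else if (i : ℕ) + 1 = (j : ℕ) then ((ρ : ℝ) - ((i : ℕ) : ℝ)) * (β : ℝ)
      else 0) :
    spectrum ℝ L = {x : ℝ | ∃ i : Fin (ρ+1), x = (k : ℝ) - ((i : ℕ) : ℝ) * ((γ : ℝ) + (β : ℝ))} := by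
  have hV : IsUnit (vandermonde fun i : Fin (ρ + 1) => ((i : ℕ) : ℝ)) :=
    (isUnit_iff_isUnit_det _).2 <| isUnit_iff_ne_zero.2 <|
      det_vandermonde_ne_zero_iff.2 <| Nat.cast_injective.comp Fin.val_injective
  have hLV : L * vandermonde (fun i : Fin (ρ + 1) => ((i : ℕ) : ℝ)) =
      vandermonde (fun i => ((i : ℕ) : ℝ)) * birthDeathOpMatrix (k : ℝ) γ β ρ := by
    rw [hL]
    exact Matrix.tridiag_mul_vandermonde (k : ℝ) γ β ρ
  rw [spectrum_eq_of_isUnit_of_mul_eq_mul hV hLV,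
    (isUpperTriangular_birthDeathOpMatrix _ _ _ ρ).spectrum_eq]
  ext x
  simp only [Set.mem_range, diag_apply, birthDeathOpMatrix, of_apply,
    coeff_birthDeathOp_X_pow_self, Set.mem_ofPred_eq, eq_comm]

/-- the tridiagonal quotient matrix has eigenvalues `k - i(γ+β)`,
an arithmetic progression with common difference `γ+β`. -/
theorem tridiagonal_eigenvalues (k γ β ρ : ℕ)
    (hk : 0 < k) (hγ : 0 < γ) (hβ : 0 < β) (hρ : 0 < ρ)
    (L : Matrix (Fin (ρ+1)) (Fin (ρ+1)) ℝ)
    (hL : L = Matrix.of fun (i j : Fin (ρ+1)) =>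
      if (j : ℕ) + 1 = (i : ℕ) then ((i : ℕ) : ℝ) * (γ : ℝ)
      else if (i : ℕ) = (j : ℕ) then
        (k : ℝ) - ((i : ℕ) : ℝ) * (γ : ℝ) - ((ρ : ℝ) - ((i : ℕ) : ℝ)) * (β : ℝ)
      else if (i : ℕ) + 1 = (j : ℕ) then ((ρ : ℝ) - ((i : ℕ) : ℝ)) * (β : ℝ)
      else 0) :
    spectrum ℝ L = {x : ℝ | ∃ i : Fin (ρ+1), x = (k : ℝ) - ((i : ℕ) : ℝ) * ((γ : ℝ) + (β : ℝ))} :=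
  tridiagonal_eigenvalues_general k γ β ρ L hL
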